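/- arXiv:2106.01524 — 3 statements merged into one kernel-verified Lean document; each statement's English description precedes it below -/
import Mathlib

section
/- Let K be a Euclidean cubical complex in ℝⁿ, let w be a vertex of K, and let L = R(K, w) be the reachable complex from w. If v is a vertex of L such that the geometric realization of pastlk(L, v) has at least two connected components, then the dipath space P(K, w, v) has at least two connected components (in particular it is disconnected). -/
open Set

namespace DCC

/-- The real point corresponding to an integer point of `ℤⁿ`. -/
def toR {n : ℕ} (v : Fin n → ℤ) : Fin n → ℝ := fun i => (v i : ℝ)

/-- `j ∈ {0,1}ⁿ`: every coordinate of `j` is `0` or `1`. -/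
def IsBinary {n : ℕ} (j : Fin n → ℤ) : Prop := ∀ i, j i = 0 ∨ j i = 1

/-- The elementary cube `[v - j, v] = {x : v - j ⪯ x ⪯ v}` in `ℝⁿ`. -/
def cube {n : ℕ} (v j : Fin n → ℤ) : Set (Fin n → ℝ) := Set.Icc (toR (v - j)) (toR v)

/-- A subset of `ℝⁿ` which is an elementary cube. -/
def IsElemCube {n : ℕ} (σ : Set (Fin n → ℝ)) : Prop := ∃ v j, IsBinary j ∧ σ = cube v j

/-- A Euclidean cubical complex: a finite union of elementary cubes. -/
def IsComplex {n : ℕ} (K : Set (Fin n → ℝ)) : Prop :=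
  ∃ C : Finset ((Fin n → ℤ) × (Fin n → ℤ)),
    (∀ c ∈ C, IsBinary c.2) ∧ K = ⋃ c ∈ C, cube c.1 c.2

/-- The past link of `v` in `K`: all nonzero binary `j` with `[v - j, v] ⊆ K`. -/
def pastlk {n : ℕ} (K : Set (Fin n → ℝ)) (v : Fin n → ℤ) : Set (Fin n → ℤ) :=
  {j | IsBinary j ∧ j ≠ 0 ∧ cube v j ⊆ K}

/-- A maximal cube of `K`: a cube of `K` not properly contained in another cube of `K`. -/
def IsMaximalCube {n : ℕ} (K σ : Set (Fin n → ℝ)) : Prop :=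
  IsElemCube σ ∧ σ ⊆ K ∧ ∀ γ, IsElemCube γ → γ ⊆ K → σ ⊆ γ → γ = σ

/-- `τ` is a free face of the maximal cube `σ` in `K`: `τ` is a proper face of `σ` and
`σ` is the unique maximal cube of `K` containing `τ`. -/
def IsFreeFace {n : ℕ} (K τ σ : Set (Fin n → ℝ)) : Prop :=
  IsElemCube τ ∧ τ ⊂ σ ∧ IsMaximalCube K σ ∧
    ∀ γ, IsMaximalCube K γ → τ ⊆ γ → γ = σ

/-- The `(τ, σ)`-collapse of `K`: the union of all cubes of `K` that do not contain `τ`. -/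
def collapse {n : ℕ} (K τ : Set (Fin n → ℝ)) : Set (Fin n → ℝ) :=
  ⋃₀ {γ | IsElemCube γ ∧ γ ⊆ K ∧ ¬ τ ⊆ γ}

/-- The restriction `K|_σ` where `σ` has minimum vertex `a` and maximum vertex `b`:
the union of all cubes `γ` of `K` with `a ⪯ min γ` and `max γ ⪯ b`. -/
def restrict {n : ℕ} (K : Set (Fin n → ℝ)) (a b : Fin n → ℤ) : Set (Fin n → ℝ) :=
  ⋃₀ {γ | ∃ v j, IsBinary j ∧ γ = cube v j ∧ cube v j ⊆ K ∧ a ≤ v - j ∧ v ≤ b}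

/-- The geometric realization of the past link of `v` in `K`, as a subset of `ℝⁿ`:
the union over `j ∈ pastlk K v` of the convex hulls of `{v - eᵢ : jᵢ = 1}`. -/
def geomReal {n : ℕ} (K : Set (Fin n → ℝ)) (v : Fin n → ℤ) : Set (Fin n → ℝ) :=
  ⋃ j ∈ pastlk K v, convexHull ℝ ((fun i => toR v - Pi.single i (1 : ℝ)) '' {i | j i = 1})

/-- The space of dipaths in `K` from `p` to `q`, as a subspace of
`C([0,1], ℝⁿ)` with the compact-open topology. -/
def DipathSpace {n : ℕ} (K : Set (Fin n → ℝ)) (p q : Fin n → ℝ) :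
    Set C(unitInterval, Fin n → ℝ) :=
  {γ | (∀ t, γ t ∈ K) ∧ γ 0 = p ∧ γ 1 = q ∧ Monotone ⇑γ}

/-- The reachable complex `R(K, p)`: points of `K` reachable from `p` by a dipath in `K`. -/
def reach {n : ℕ} (K : Set (Fin n → ℝ)) (p : Fin n → ℝ) : Set (Fin n → ℝ) :=
  {q ∈ K | (DipathSpace K p q).Nonempty}

/-- `(τ, σ)` is an LPDC pair in `K` (where `K'` is the `(τ,σ)`-collapse of `K`):
for every vertex `v` of `K'`, the geometric realizations of the past links of `v`
in `K` and in `K'` are homotopy equivalent. -/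
def IsLPDCPair {n : ℕ} (K τ : Set (Fin n → ℝ)) : Prop :=
  ∀ v : Fin n → ℤ, toR v ∈ collapse K τ →
    Nonempty (ContinuousMap.HomotopyEquiv ↥(geomReal K v) ↥(geomReal (collapse K τ) v))

/-!
A dipath `γ` from `w` to `v` is monotone, so `depth v (γ t) = ∑ᵢ (vᵢ - γᵢ(t))` decreases from
at least `1` to `0` and `γ` meets the hyperplane `depth v · = 1` in exactly one point, its
`crossing`. This point lies in the realization of `pastlk (R(K, w), v)`: the cube spanned by `v`
and the crossing point belongs to `K` (it is either contained in a cube of `K` through the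
crossing point or, when the crossing point is a vertex `v - eᵢ`, it is the edge that `γ` runs
along), and each of its points `q` is reached by the dipath `γ ⊓ q`. Conversely every point of
the realization is the crossing of a dipath (go there inside `R(K, w)`, then straight up to `v`).
Since the crossing map is continuous, dipaths in one component of `P(K, w, v)` cross in one
component of the realization.
-/

variable {n : ℕ}

open unitInterval

theorem continuous_of_isClosed_graph {X Y : Type*} [TopologicalSpace X] [TopologicalSpace Y]
    [CompactSpace Y] {f : X → Y} (hf : IsClosed {p : X × Y | f p.1 = p.2}) : Continuous f := by
  refine continuous_iff_isClosed.2 fun C hC => ?_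
  convert isClosedMap_fst_of_compactSpace _ (hf.inter (hC.preimage continuous_snd))
  ext x
  constructor
  · exact fun hx => ⟨(x, f x), ⟨rfl, hx⟩, rfl⟩
  · rintro ⟨⟨x, y⟩, ⟨hxy : f x = y, hy⟩, rfl⟩
    exact hxy ▸ hy

theorem monotone_path_trans {X : Type*} [TopologicalSpace X] [Preorder X] {x y z : X}
    {p : Path x y} {q : Path y z} (hp : Monotone p) (hq : Monotone q) :
    Monotone (p.trans q) := by
  intro s t hst
  have hst' : (s : ℝ) ≤ t := hst
  simp only [Path.trans_apply]
  split_ifs with hs ht ht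
  · exact hp (Subtype.mk_le_mk.mpr (by linarith))
  · calc _ ≤ p 1 := hp le_one'
      _ = q 0 := p.target.trans q.source.symm
      _ ≤ _ := hq nonneg'
  · exact absurd (hst'.trans ht) hs
  · exact hq (Subtype.mk_le_mk.mpr (by linarith))

theorem monotone_path_segment {a b : Fin n → ℝ} (hab : a ≤ b) : Monotone (Path.segment a b) := by
  intro s t hst i
  simp only [Path.segment_apply, AffineMap.lineMap_apply_module', Pi.add_apply, Pi.smul_apply,
    smul_eq_mul, Pi.sub_apply]
  have := hab i
  have hst' : (s : ℝ) ≤ t := hst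
  nlinarith

theorem mem_cube_iff {v j : Fin n → ℤ} {p : Fin n → ℝ} :
    p ∈ cube v j ↔ ∀ i, (v i : ℝ) - j i ≤ p i ∧ p i ≤ v i := by
  simp only [cube, mem_Icc, Pi.le_def, toR, Pi.sub_apply, Int.cast_sub, forall_and]

theorem IsComplex.exists_cube {K : Set (Fin n → ℝ)} (hK : IsComplex K) {p : Fin n → ℝ}
    (hp : p ∈ K) : ∃ u j, p ∈ cube u j ∧ cube u j ⊆ K := by
  obtain ⟨C, -, rfl⟩ := hK
  obtain ⟨c, hc, hpc⟩ := mem_iUnion₂.mp hp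
  exact ⟨c.1, c.2, hpc, fun y hy => mem_iUnion₂.mpr ⟨c, hc, hy⟩⟩

theorem le_of_mem_reach {K : Set (Fin n → ℝ)} {p q : Fin n → ℝ} (hq : q ∈ reach K p) : p ≤ q := by
  obtain ⟨-, γ, -, h0, h1, hγ⟩ := hq
  exact h0 ▸ h1 ▸ hγ (zero_le_one' I)

theorem exists_dipath_through {K : Set (Fin n → ℝ)} {p q r : Fin n → ℝ}
    {α : C(I, Fin n → ℝ)} (hα : α ∈ DipathSpace K p q)
    {β : C(I, Fin n → ℝ)} (hβ : β ∈ DipathSpace K q r) :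
    ∃ γ ∈ DipathSpace K p r, q ∈ range γ := by
  obtain ⟨hαK, hα0, hα1, hαm⟩ := hα
  obtain ⟨hβK, hβ0, hβ1, hβm⟩ := hβ
  let α' : Path p q := ⟨α, hα0, hα1⟩
  let β' : Path q r := ⟨β, hβ0, hβ1⟩
  refine ⟨(α'.trans β').toContinuousMap, ⟨fun t => ?_, (α'.trans β').source,
    (α'.trans β').target, monotone_path_trans hαm hβm⟩, ?_⟩
  · have : (α'.trans β') t ∈ range α' ∪ range β' := by
      rw [← Path.trans_range]; exact mem_range_self t
    rcases this with ⟨s, hs⟩ | ⟨s, hs⟩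
    · exact hs ▸ hαK s
    · exact hs ▸ hβK s
  · show q ∈ range (α'.trans β')
    rw [Path.trans_range]
    exact Or.inr ⟨0, hβ0⟩

def depth (v p : Fin n → ℝ) : ℝ := ∑ i, (v i - p i)

section Depth

variable {v : Fin n → ℝ}

theorem depth_self : depth v v = 0 := by simp [depth]

theorem continuous_depth : Continuous (depth v) := by unfold depth; fun_prop

theorem antitone_depth : Antitone (depth v) := fun _ _ h =>
  Finset.sum_le_sum fun i _ => sub_le_sub_left (h i) _

theorem sub_le_depth {p : Fin n → ℝ} (hp : p ≤ v) (i : Fin n) : v i - p i ≤ depth v p :=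
  Finset.single_le_sum (fun k _ => sub_nonneg.2 (hp k)) (Finset.mem_univ i)

theorem sub_add_sub_le_depth {p : Fin n → ℝ} (hp : p ≤ v) {i k : Fin n} (hik : i ≠ k) :
    (v i - p i) + (v k - p k) ≤ depth v p := by
  rw [← Finset.sum_pair (f := fun l => v l - p l) hik]
  exact Finset.sum_le_sum_of_subset_of_nonneg (Finset.subset_univ _)
    fun l _ _ => sub_nonneg.2 (hp l)

theorem eq_of_le_of_depth_eq {p q : Fin n → ℝ} (hpq : p ≤ q) (h : depth v p = depth v q) :
    p = q := by
  have hsum : ∑ i, (q i - p i) = 0 := by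
    rw [← sub_eq_zero.2 h, depth, depth, ← Finset.sum_sub_distrib]
    exact Finset.sum_congr rfl fun i _ => by ring
  funext i
  have := (Finset.sum_eq_zero_iff_of_nonneg fun k _ => sub_nonneg.2 (hpq k)).1 hsum i
    (Finset.mem_univ i)
  linarith

theorem convex_depth_eq (c : ℝ) : Convex ℝ {p | depth v p = c} := by
  intro p hp q hq a b ha hb hab
  simp only [mem_ofPred_eq, depth, Pi.add_apply, Pi.smul_apply, smul_eq_mul] at hp hq ⊢
  calc ∑ i, (v i - (a * p i + b * q i)) = a * ∑ i, (v i - p i) + b * ∑ i, (v i - q i) := by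
        rw [Finset.mul_sum, Finset.mul_sum, ← Finset.sum_add_distrib]
        refine Finset.sum_congr rfl fun i _ => ?_
        linear_combination (v i) * hab.symm
    _ = c := by rw [hp, hq, ← add_mul, hab, one_mul]

end Depth

open Classical in
noncomputable def crossing (v : Fin n → ℝ) (γ : C(I, Fin n → ℝ)) : Fin n → ℝ :=
  if h : ∃ t, depth v (γ t) = 1 then γ h.choose else 0

section Crossing

variable {v : Fin n → ℝ} {γ : C(I, Fin n → ℝ)}

theorem exists_depth_eq_one (h0 : 1 ≤ depth v (γ 0)) (h1 : depth v (γ 1) ≤ 1) :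
    ∃ t, depth v (γ t) = 1 :=
  intermediate_value_univ 1 0 (continuous_depth.comp γ.continuous) ⟨h1, h0⟩

theorem crossing_eq (hγ : Monotone γ) {t : I} (ht : depth v (γ t) = 1) : crossing v γ = γ t := by
  have h : ∃ t, depth v (γ t) = 1 := ⟨t, ht⟩
  rw [crossing, dif_pos h]
  rcases le_total h.choose t with hle | hle
  · exact eq_of_le_of_depth_eq (hγ hle) (h.choose_spec.trans ht.symm)
  · exact (eq_of_le_of_depth_eq (hγ hle) (ht.trans h.choose_spec.symm)).symm

theorem crossing_mem_Icc {K : Set (Fin n → ℝ)} {a b : Fin n → ℝ} (hγ : γ ∈ DipathSpace K a b)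
    (ha : 1 ≤ depth v a) (hb : depth v b ≤ 1) : crossing v γ ∈ Icc a b := by
  obtain ⟨-, h0, h1, hγm⟩ := hγ
  obtain ⟨t, ht⟩ := exists_depth_eq_one (h0 ▸ ha) (h1 ▸ hb)
  rw [crossing_eq hγm ht, ← h0, ← h1]
  exact ⟨hγm t.2.1, hγm t.2.2⟩

/-- The graph of `crossing` is the projection along the compact factor `I` of a closed set,
and its values lie in the compact box `[a, b]`. -/
theorem continuousOn_crossing {K : Set (Fin n → ℝ)} {a b : Fin n → ℝ} (ha : 1 ≤ depth v a)
    (hb : depth v b ≤ 1) : ContinuousOn (crossing v) (DipathSpace K a b) := by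
  set S := DipathSpace K a b
  let g : S → Icc a b := fun γ => ⟨crossing v γ, crossing_mem_Icc γ.2 ha hb⟩
  suffices Continuous g by
    rw [continuousOn_iff_continuous_domRestrict]
    exact continuous_subtype_val.comp this
  apply continuous_of_isClosed_graph
  have hgraph : {p : S × Icc a b | g p.1 = p.2} = Prod.fst ''
      {q : (S × Icc a b) × I | (q.1.1 : C(I, Fin n → ℝ)) q.2 = q.1.2 ∧ depth v q.1.2 = 1} := by
    ext ⟨γ, p⟩
    obtain ⟨-, h0, h1, hγm⟩ := γ.2
    constructor
    · rintro (rfl : g γ = p)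
      obtain ⟨t, ht⟩ := exists_depth_eq_one (v := v) (h0 ▸ ha) (h1 ▸ hb)
      have hcross := crossing_eq hγm ht
      exact ⟨((γ, g γ), t), ⟨hcross.symm, show depth v (crossing v γ) = 1 from hcross ▸ ht⟩, rfl⟩
    · rintro ⟨⟨⟨γ', p'⟩, t⟩, ⟨hγt, hp⟩, hq⟩
      obtain ⟨rfl, rfl⟩ := Prod.ext_iff.1 hq
      exact Subtype.ext ((crossing_eq hγm (hγt ▸ hp)).trans hγt)
  rw [hgraph]
  have heval : Continuous fun q : (S × Icc a b) × I => (q.1.1 : C(I, Fin n → ℝ)) q.2 :=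
    continuous_eval.comp
      ((continuous_subtype_val.comp (continuous_fst.comp continuous_fst)).prodMk continuous_snd)
  have hp : Continuous fun q : (S × Icc a b) × I => (q.1.2 : Fin n → ℝ) :=
    continuous_subtype_val.comp (continuous_snd.comp continuous_fst)
  exact isClosedMap_fst_of_compactSpace _
    ((isClosed_eq heval hp).inter (isClosed_eq (continuous_depth.comp hp) continuous_const))

end Crossing

/-- For `v - 1 ⪯ x ⪯ v`, `[v - carrier v x, v]` is the smallest cube with top vertex `v`
containing `x`. -/
noncomputable def carrier (v : Fin n → ℤ) (x : Fin n → ℝ) : Fin n → ℤ :=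
  fun i => if x i = v i then 0 else 1

section Carrier

variable {v : Fin n → ℤ} {x : Fin n → ℝ}

theorem isBinary_carrier : IsBinary (carrier v x) := fun i => by
  unfold carrier; split_ifs <;> simp

theorem mem_cube_carrier_iff {q : Fin n → ℝ} :
    q ∈ cube v (carrier v x) ↔
      ∀ i, (if x i = v i then (v i : ℝ) else v i - 1) ≤ q i ∧ q i ≤ v i := by
  rw [mem_cube_iff]
  refine forall_congr' fun i => ?_
  unfold carrier
  split_ifs <;> simp

theorem carrier_ne_zero (hx : depth (toR v) x = 1) : carrier v x ≠ 0 := by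
  intro h
  have hxv : x = toR v := funext fun i => by
    have := congrFun h i
    simp only [carrier, Pi.zero_apply, ite_eq_left_iff, one_ne_zero, imp_false, not_not] at this
    exact this
  rw [hxv, depth_self] at hx
  exact zero_ne_one hx

theorem mem_cube_carrier (hxv : x ≤ toR v) (hx : depth (toR v) x = 1) :
    x ∈ cube v (carrier v x) := by
  refine mem_cube_carrier_iff.2 fun i => ⟨?_, hxv i⟩
  split_ifs with h
  · exact h.ge
  · have := sub_le_depth hxv i
    rw [hx] at this
    simp only [toR] at this
    linarith

theorem toR_le_of_mem_cube_carrier {m : Fin n → ℤ} {q : Fin n → ℝ} (hmx : toR m ≤ x)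
    (hxv : x ≤ toR v) (hq : q ∈ cube v (carrier v x)) : toR m ≤ q := by
  intro i
  have hqi := (mem_cube_carrier_iff.1 hq i).1
  have hmi : (m i : ℝ) ≤ x i := hmx i
  have hxi : x i ≤ v i := hxv i
  split_ifs at hqi with h
  · exact hmi.trans (h.le.trans hqi)
  · have hlt : m i < v i := by exact_mod_cast hmi.trans_lt (lt_of_le_of_ne hxi h)
    have : (m i : ℝ) ≤ v i - 1 := by exact_mod_cast Int.le_sub_one_of_lt hlt
    exact this.trans hqi

theorem cube_carrier_subset_cube {u j : Fin n → ℤ} (hxu : x ∈ cube u j) (hxv : x ≤ toR v)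
    (hvx : ∀ i, (v i : ℝ) - 1 < x i) : cube v (carrier v x) ⊆ cube u j := by
  intro q hq
  refine ⟨toR_le_of_mem_cube_carrier hxu.1 hxv hq, fun i => (hq.2 i).trans ?_⟩
  have hxi : x i ≤ u i := hxu.2 i
  have : v i - 1 < u i := by exact_mod_cast (hvx i).trans_le hxi
  show (v i : ℝ) ≤ u i
  exact_mod_cast Int.le_of_sub_one_lt this

theorem toR_sub_carrier (hx : ∀ i, x i = v i ∨ x i = v i - 1) : toR (v - carrier v x) = x := by
  funext i
  simp only [toR, carrier, Pi.sub_apply]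
  split_ifs with h
  · simp [h]
  · rcases hx i with h' | h'
    · exact absurd h' h
    · simp [h']

theorem mem_convexHull_carrier (hxv : x ≤ toR v) (hx : depth (toR v) x = 1) :
    x ∈ convexHull ℝ ((fun i => toR v - Pi.single i (1 : ℝ)) '' {i | carrier v x i = 1}) := by
  set T := Finset.univ.filter fun i => carrier v x i = 1
  have hoff : ∀ i ∉ T, toR v i - x i = 0 := fun i hi => by
    have hi' : carrier v x i ≠ 1 := fun h => hi (Finset.mem_filter.2 ⟨Finset.mem_univ _, h⟩)
    unfold carrier at hi'
    split_ifs at hi' with h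
    · simp [h, toR]
    · exact absurd rfl hi'
  have hsum : ∑ i ∈ T, (toR v i - x i) = 1 := by
    rw [Finset.sum_subset (Finset.subset_univ T) fun i _ hi => hoff i hi]
    exact hx
  -- `x` is the centre of mass of the vertices `v - eᵢ`, `i ∈ T`, with weights `vᵢ - xᵢ`
  have hmem := T.centerMass_mem_convexHull (fun i _ => sub_nonneg.2 (hxv i))
    (hsum ▸ zero_lt_one) (z := fun i => toR v - Pi.single i (1 : ℝ))
    (s := (fun i => toR v - Pi.single i (1 : ℝ)) '' {i | carrier v x i = 1})
    fun i hi => ⟨i, (Finset.mem_filter.1 hi).2, rfl⟩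
  convert hmem using 1
  rw [Finset.centerMass_eq_of_sum_1 _ _ hsum]
  funext k
  simp only [Finset.sum_apply, Pi.smul_apply, Pi.sub_apply, smul_eq_mul, mul_sub,
    Finset.sum_sub_distrib, ← Finset.sum_mul, hsum, one_mul, Pi.single_apply, mul_ite, mul_one,
    mul_zero, Finset.sum_ite_eq T k]
  split_ifs with hk
  · ring
  · linarith [hoff k hk]

end Carrier

theorem Icc_subset_range_of_monotone {γ : C(I, Fin n → ℝ)} (hγ : Monotone γ) {s t : I}
    (hst : s ≤ t) {i : Fin n} (hi : ∀ k ≠ i, γ s k = γ t k) : Icc (γ s) (γ t) ⊆ range γ := by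
  intro p hp
  obtain ⟨r, hr, hri⟩ := intermediate_value_Icc hst
    ((continuous_apply i).comp γ.continuous).continuousOn ⟨hp.1 i, hp.2 i⟩
  refine ⟨r, funext fun k => ?_⟩
  by_cases hk : k = i
  · exact hk ▸ hri
  · have h₁ := hγ hr.1 k
    have h₂ := hγ hr.2 k
    have h₃ := hp.1 k
    have h₄ := hp.2 k
    rw [← hi k hk] at h₂ h₄
    exact (h₂.antisymm h₁).trans (h₃.antisymm h₄)

theorem exists_cube_of_mem_geomReal {L : Set (Fin n → ℝ)} {v : Fin n → ℤ} {x : Fin n → ℝ}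
    (hx : x ∈ geomReal L v) : ∃ j, cube v j ⊆ L ∧ x ∈ cube v j ∧ depth (toR v) x = 1 := by
  obtain ⟨j, ⟨hj, -, hjL⟩, hxj⟩ := mem_iUnion₂.1 hx
  refine ⟨j, hjL, convexHull_min ?_ ((convex_Icc _ _).inter (convex_depth_eq 1)) hxj⟩
  rintro _ ⟨i, hi, rfl⟩
  refine ⟨mem_cube_iff.2 fun k => ?_, ?_⟩
  · by_cases hk : k = i
    · subst hk
      simp [toR, show j k = 1 from hi]
    · have : (0 : ℝ) ≤ j k := by rcases hj k with h | h <;> simp [h]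
      simp [toR, hk, this]
  · simp [depth, toR, Pi.single_apply]

section CarrierCube

variable {K : Set (Fin n → ℝ)} {v : Fin n → ℤ} {γ : C(I, Fin n → ℝ)} {t : I}

theorem cube_carrier_subset (hK : IsComplex K) {p : Fin n → ℝ}
    (hγ : γ ∈ DipathSpace K p (toR v)) (ht : depth (toR v) (γ t) = 1) :
    cube v (carrier v (γ t)) ⊆ K := by
  obtain ⟨hγK, -, hγ1, hγm⟩ := hγ
  have hxv : γ t ≤ toR v := hγ1 ▸ hγm le_one'
  by_cases hint : ∀ i, (v i : ℝ) - 1 < γ t i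
  · obtain ⟨u, j, hxu, huK⟩ := hK.exists_cube (hγK t)
    exact (cube_carrier_subset_cube hxu hxv hint).trans huK
  · -- `γ t` is a vertex `v - eᵢ`, and `γ` runs along the edge from it up to `v`
    simp only [not_forall, not_lt] at hint
    obtain ⟨i, hi⟩ := hint
    have hi' : toR v i - γ t i = 1 := by
      have := sub_le_depth hxv i
      simp only [toR] at this hi ⊢
      linarith
    have hothers : ∀ k ≠ i, γ t k = toR v k := fun k hk => by
      have := sub_add_sub_le_depth hxv (Ne.symm hk)
      linarith [hxv k]
    have hcube : cube v (carrier v (γ t)) = Icc (γ t) (γ 1) := by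
      rw [cube, hγ1, toR_sub_carrier fun k => ?_]
      by_cases hk : k = i
      · exact Or.inr (by simp only [toR] at hi'; subst hk; linarith)
      · exact Or.inl (hothers k hk)
    rw [hcube]
    exact (Icc_subset_range_of_monotone hγm le_one' fun k hk => by rw [hothers k hk, hγ1]).trans
      (range_subset_iff.2 hγK)

theorem cube_carrier_subset_reach (hK : IsComplex K) {w : Fin n → ℤ}
    (hγ : γ ∈ DipathSpace K (toR w) (toR v)) (ht : depth (toR v) (γ t) = 1) :
    cube v (carrier v (γ t)) ⊆ reach K (toR w) := by
  have hcubeK := cube_carrier_subset hK hγ ht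
  obtain ⟨hγK, hγ0, hγ1, hγm⟩ := hγ
  have hxv : γ t ≤ toR v := hγ1 ▸ hγm le_one'
  intro q hq
  have hcont : Continuous fun s => γ s ⊓ q :=
    continuous_pi fun i => ((continuous_apply i).comp γ.continuous).min continuous_const
  refine ⟨hcubeK hq, ⟨fun s => γ s ⊓ q, hcont⟩, fun s => ?_, ?_, ?_,
    fun s s' h => inf_le_inf_right q (hγm h)⟩
  · rcases le_total s t with hst | hts
    · obtain ⟨u, j, hsu, huK⟩ := hK.exists_cube (hγK s)
      exact huK ⟨le_inf hsu.1 (toR_le_of_mem_cube_carrier (hsu.1.trans (hγm hst)) hxv hq),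
        inf_le_left.trans hsu.2⟩
    · exact hcubeK ⟨le_inf ((mem_cube_carrier hxv ht).1.trans (hγm hts)) hq.1,
        inf_le_right.trans hq.2⟩
  · show γ 0 ⊓ q = toR w
    rw [hγ0]
    exact inf_eq_left.2 (toR_le_of_mem_cube_carrier (hγ0 ▸ hγm t.2.1) hxv hq)
  · show γ 1 ⊓ q = q
    rw [hγ1]
    exact inf_eq_right.2 hq.2

end CarrierCube

theorem crossing_mem_geomReal {K : Set (Fin n → ℝ)} (hK : IsComplex K) {w v : Fin n → ℤ}
    {γ : C(I, Fin n → ℝ)} (hγ : γ ∈ DipathSpace K (toR w) (toR v))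
    (hw : 1 ≤ depth (toR v) (toR w)) : crossing (toR v) γ ∈ geomReal (reach K (toR w)) v := by
  have ⟨_, hγ0, hγ1, hγm⟩ := hγ
  obtain ⟨t, ht⟩ := exists_depth_eq_one (hγ0 ▸ hw) (by rw [hγ1, depth_self]; exact zero_le_one)
  have hxv : γ t ≤ toR v := hγ1 ▸ hγm le_one'
  rw [crossing_eq hγm ht]
  exact mem_iUnion₂.2 ⟨_, ⟨isBinary_carrier, carrier_ne_zero ht,
    cube_carrier_subset_reach hK hγ ht⟩, mem_convexHull_carrier hxv ht⟩

section GeomReal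

variable {K : Set (Fin n → ℝ)} {p : Fin n → ℝ} {v : Fin n → ℤ} {x : Fin n → ℝ}

theorem exists_dipath_crossing_eq (hx : x ∈ geomReal (reach K p) v) :
    ∃ γ ∈ DipathSpace K p (toR v), crossing (toR v) γ = x := by
  obtain ⟨j, hjL, hxj, hx1⟩ := exists_cube_of_mem_geomReal hx
  obtain ⟨-, α, hα⟩ := hjL hxj
  have hseg : (Path.segment x (toR v)).toContinuousMap ∈ DipathSpace K x (toR v) :=
    ⟨fun s => (hjL ((convex_Icc _ _).segment_subset hxj (right_mem_Icc.2 (hxj.1.trans hxj.2))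
      ((Path.range_segment _ _).subset (mem_range_self s)))).1,
      Path.source _, Path.target _, monotone_path_segment hxj.2⟩
  obtain ⟨γ, hγ, t, hγt⟩ := exists_dipath_through hα hseg
  exact ⟨γ, hγ, (crossing_eq hγ.2.2.2 (hγt ▸ hx1)).trans hγt⟩

theorem one_le_depth_of_mem_geomReal (hx : x ∈ geomReal (reach K p) v) :
    1 ≤ depth (toR v) p := by
  obtain ⟨j, hjL, hxj, hx1⟩ := exists_cube_of_mem_geomReal hx
  exact hx1 ▸ antitone_depth (le_of_mem_reach (hjL hxj))

end GeomReal

theorem statement7_general (n : ℕ) (K : Set (Fin n → ℝ)) (hK : IsComplex K)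
    (w : Fin n → ℤ)
    (v : Fin n → ℤ)
    (x y : Fin n → ℝ)
    (hx : x ∈ geomReal (reach K (toR w)) v) (hy : y ∈ geomReal (reach K (toR w)) v)
    (hxy : connectedComponentIn (geomReal (reach K (toR w)) v) x ≠
           connectedComponentIn (geomReal (reach K (toR w)) v) y) :
    ∃ γ₁ ∈ DipathSpace K (toR w) (toR v), ∃ γ₂ ∈ DipathSpace K (toR w) (toR v),
      connectedComponentIn (DipathSpace K (toR w) (toR v)) γ₁ ≠
      connectedComponentIn (DipathSpace K (toR w) (toR v)) γ₂ := by
  have hw := one_le_depth_of_mem_geomReal hx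
  have hcont : ContinuousOn (crossing (toR v)) (DipathSpace K (toR w) (toR v)) :=
    continuousOn_crossing hw (by rw [depth_self]; exact zero_le_one)
  have hmaps : MapsTo (crossing (toR v)) (DipathSpace K (toR w) (toR v))
      (geomReal (reach K (toR w)) v) := fun γ hγ => crossing_mem_geomReal hK hγ hw
  obtain ⟨γ₁, hγ₁, rfl⟩ := exists_dipath_crossing_eq hx
  obtain ⟨γ₂, hγ₂, rfl⟩ := exists_dipath_crossing_eq hy
  refine ⟨γ₁, hγ₁, γ₂, hγ₂, fun h => hxy (connectedComponentIn_eq ?_)⟩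
  have h₂ : γ₂ ∈ connectedComponentIn (DipathSpace K (toR w) (toR v)) γ₁ :=
    h ▸ mem_connectedComponentIn hγ₂
  exact connectedComponentIn_mono _ hmaps.image_subset (hcont.mapsTo_connectedComponentIn hγ₁ h₂)

theorem statement7 (n : ℕ) (hn : 0 < n) (K : Set (Fin n → ℝ)) (hK : IsComplex K)
    (w : Fin n → ℤ) (hw : toR w ∈ K)
    (v : Fin n → ℤ) (hv : toR v ∈ reach K (toR w))
    (x y : Fin n → ℝ)
    (hx : x ∈ geomReal (reach K (toR w)) v) (hy : y ∈ geomReal (reach K (toR w)) v)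
    (hxy : connectedComponentIn (geomReal (reach K (toR w)) v) x ≠
           connectedComponentIn (geomReal (reach K (toR w)) v) y) :
    ∃ γ₁ ∈ DipathSpace K (toR w) (toR v), ∃ γ₂ ∈ DipathSpace K (toR w) (toR v),
      connectedComponentIn (DipathSpace K (toR w) (toR v)) γ₁ ≠
      connectedComponentIn (DipathSpace K (toR w) (toR v)) γ₂ :=
  statement7_general n K hK w v x y hx hy hxy

end DCC
end

section
/- Let K be a Euclidean cubical complex in ℝⁿ, let σ be a cube of K, let τ = min σ (a vertex), and let v be a vertex of σ. If τ is a free face of σ and K' is the (τ, σ)-collapse of K, then pastlk(K'|_σ, v) = { j ∈ {0,1}ⁿ ∖ {0} : j ⪯ v − min σ and j ≠ v − min σ }. -/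
open Set

namespace DCC

lemma toR_le_toR {n : ℕ} {a b : Fin n → ℤ} : toR a ≤ toR b ↔ a ≤ b := by
  constructor <;> intro h i <;> have := h i <;> simpa [toR] using this

lemma cube_zero {n : ℕ} (v : Fin n → ℤ) : cube v 0 = {toR v} := by
  simp [cube, sub_zero, Set.Icc_self]

lemma mem_cube_min {n : ℕ} {v j : Fin n → ℤ} (hj : IsBinary j) :
    toR (v - j) ∈ cube v j := by
  refine ⟨le_refl _, toR_le_toR.mpr ?_⟩
  intro i
  rcases hj i with h | h <;> simp [h]

theorem statement10 (n : ℕ) (hn : 0 < n) (K : Set (Fin n → ℝ)) (hK : IsComplex K)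
    (vσ jσ : Fin n → ℤ) (hjσ : IsBinary jσ) (hσK : cube vσ jσ ⊆ K)
    (v : Fin n → ℤ) (hv1 : vσ - jσ ≤ v) (hv2 : v ≤ vσ)
    (hfree : IsFreeFace K (cube (vσ - jσ) 0) (cube vσ jσ)) :
    pastlk (restrict (collapse K (cube (vσ - jσ) 0)) (vσ - jσ) vσ) v
      = {j | IsBinary j ∧ j ≠ 0 ∧ j ≤ v - (vσ - jσ) ∧ j ≠ v - (vσ - jσ)} := by
  have hτ : cube (vσ - jσ) (0 : Fin n → ℤ) = {toR (vσ - jσ)} := cube_zero _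
  ext j
  simp only [pastlk, mem_setOf_eq]
  constructor
  · rintro ⟨hjb, hj0, hsub⟩
    refine ⟨hjb, hj0, ?_, ?_⟩
    · -- j ≤ v - (vσ - jσ)
      have hmem := hsub (mem_cube_min hjb)
      obtain ⟨γ, ⟨w, k, hkb, rfl, hwK, hw1, hw2⟩, hmemγ⟩ := hmem
      have h1 : w - k ≤ v - j := toR_le_toR.mp hmemγ.1
      intro i
      have h2 := h1 i
      have h3 := hw1 i
      simp only [Pi.sub_apply] at h2 h3 ⊢
      omega
    · -- j ≠ v - (vσ - jσ)
      intro heq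
      have hvj : v - j = vσ - jσ := by
        funext i
        have := congrFun heq i
        simp only [Pi.sub_apply] at this ⊢
        omega
      have hmem := hsub (mem_cube_min hjb)
      rw [hvj] at hmem
      obtain ⟨γ, ⟨w, k, hkb, rfl, hwK, hw1, hw2⟩, hmemγ⟩ := hmem
      obtain ⟨δ, ⟨hδe, hδK, hδτ⟩, hmemδ⟩ := hwK hmemγ
      exact hδτ (by rw [hτ]; exact singleton_subset_iff.mpr hmemδ)
  · rintro ⟨hjb, hj0, hle, hne⟩
    refine ⟨hjb, hj0, ?_⟩
    have hcol : cube v j ⊆ collapse K (cube (vσ - jσ) 0) := by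
      apply subset_sUnion_of_mem
      refine ⟨⟨v, j, hjb, rfl⟩, ?_, ?_⟩
      · refine subset_trans (Set.Icc_subset_Icc (toR_le_toR.mpr ?_) (toR_le_toR.mpr hv2)) hσK
        intro i; have := hle i; simp only [Pi.sub_apply] at this ⊢; omega
      · rw [hτ, singleton_subset_iff]
        intro hc
        apply hne
        have h1 : v - j ≤ vσ - jσ := toR_le_toR.mp hc.1
        have h2 : vσ - jσ ≤ v - j := by
          intro i; have := hle i; simp only [Pi.sub_apply] at this ⊢; omega
        funext i
        have := h1 i; have := h2 i
        simp only [Pi.sub_apply] at *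
        omega
    apply subset_sUnion_of_mem
    refine ⟨v, j, hjb, rfl, hcol, ?_, hv2⟩
    intro i; have := hle i; simp only [Pi.sub_apply] at this ⊢; omega


end DCC
end

section
/- Let K be a Euclidean cubical complex in ℝⁿ and let τ, σ be cubes of K such that τ is a free face of σ; let K' be the (τ, σ)-collapse of K. Then for every vertex v of K such that max τ ⋠ v (max τ is not ⪯ v), we have pastlk(K, v) = pastlk(K', v). -/
open Set

namespace DCC

theorem statement12 (n : ℕ) (hn : 0 < n) (K : Set (Fin n → ℝ)) (hK : IsComplex K)
    (vτ jτ vσ jσ : Fin n → ℤ) (hjτ : IsBinary jτ) (hjσ : IsBinary jσ)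
    (hτK : cube vτ jτ ⊆ K) (hσK : cube vσ jσ ⊆ K)
    (hfree : IsFreeFace K (cube vτ jτ) (cube vσ jσ))
    (v : Fin n → ℤ) (hv : toR v ∈ K) (hmax : ¬ vτ ≤ v) :
    pastlk K v = pastlk (collapse K (cube vτ jτ)) v := by
  have hcollK : collapse K (cube vτ jτ) ⊆ K := by
    rintro x hx
    rcases Set.mem_sUnion.1 hx with ⟨γ, ⟨_, hγK, _⟩, hxγ⟩
    exact hγK hxγ
  have hvτmem : toR vτ ∈ cube vτ jτ := by
    refine ⟨fun i => ?_, le_refl _⟩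
    show ((vτ i - jτ i : ℤ) : ℝ) ≤ (vτ i : ℝ)
    rcases hjτ i with h | h <;> simp [h]
  ext j
  simp only [pastlk, Set.mem_setOf_eq]
  constructor
  · rintro ⟨hb, hne, hsub⟩
    refine ⟨hb, hne, fun x hx => ?_⟩
    refine Set.mem_sUnion.2 ⟨cube v j, ⟨⟨v, j, hb, rfl⟩, hsub, fun hτsub => ?_⟩, hx⟩
    have hmem := hτsub hvτmem
    refine hmax (fun i => ?_)
    have := hmem.2 i
    simpa [toR] using this
  · rintro ⟨hb, hne, hsub⟩
    exact ⟨hb, hne, hsub.trans hcollK⟩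


end DCC
end
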